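/- arXiv:1911.00223 — 3 statements merged into one kernel-verified Lean document; each statement's English description precedes it below -/
import Mathlib

section
/- Let G be a finite connected simple graph with real edge weights that are pairwise distinct, let T be its (unique) minimum spanning tree, and let P be the Prim order of G with an arbitrary seed vertex. Let e_max = (v_i, v_j) be the edge of T of maximum weight, and set P(e_max) = max(P(v_i), P(v_j)). Then deleting e_max from T leaves exactly two connected components T_L and T_R, and their vertex sets are V_L = {v ∈ V : P(v) < P(e_max)} and V_R = {v ∈ V : P(v) ≥ P(e_max)}. -/
open SimpleGraph

variable {V : Type*}

/-- `P` is a Prim order of the graph `H` restricted to the vertex set `S`, with seed `v₀`: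
`P` maps `S` bijectively onto `{1, …, |S|}`, `P v₀ = 1`, and each vertex other than the seed
is joined to an earlier vertex by an edge of minimum weight among all edges of `H` (within `S`)
from the earlier vertices to the later ones. -/
def IsPrimOrderOn (H : SimpleGraph V) (w : Sym2 V → ℝ)
    (S : Set V) (v₀ : V) (P : V → ℕ) : Prop :=
  v₀ ∈ S ∧ P v₀ = 1 ∧ Set.BijOn P S (Set.Icc 1 S.ncard) ∧
    ∀ v ∈ S, P v ≠ 1 →
      ∃ u ∈ S, P u < P v ∧ H.Adj u v ∧
        ∀ x ∈ S, ∀ y ∈ S, P x < P v → P v ≤ P y → H.Adj x y →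
          w s(u, v) ≤ w s(x, y)

/-- Total edge weight of a graph on a finite vertex type. -/
noncomputable def totalWeight [Fintype V] (H : SimpleGraph V) (w : Sym2 V → ℝ) : ℝ :=
  ∑ e ∈ H.edgeSet.toFinite.toFinset, w e

/-- `H` is a tree on the vertex set `S`: all its edges lie within `S`, any two vertices of `S`
are joined by a path, and `H` is acyclic. -/
def IsTreeOn (H : SimpleGraph V) (S : Set V) : Prop :=
  (∀ e ∈ H.edgeSet, ∀ v ∈ e, v ∈ S) ∧ (∀ u ∈ S, ∀ v ∈ S, H.Reachable u v) ∧ H.IsAcyclic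

/-- `T` is a minimum spanning tree of `G` on the vertex set `S`. -/
def IsMSTOn [Fintype V] (G : SimpleGraph V) (w : Sym2 V → ℝ) (S : Set V)
    (T : SimpleGraph V) : Prop :=
  T ≤ G ∧ IsTreeOn T S ∧
    ∀ T' : SimpleGraph V, T' ≤ G → IsTreeOn T' S → totalWeight T w ≤ totalWeight T' w

/-- Restriction of a graph to the edges with both endpoints in `S`. -/
def restrictTo (H : SimpleGraph V) (S : Set V) : SimpleGraph V where
  Adj a b := H.Adj a b ∧ a ∈ S ∧ b ∈ S
  symm := ⟨fun a b ⟨h, ha, hb⟩ => ⟨h.symm, hb, ha⟩⟩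
  loopless := ⟨fun a ⟨h, _, _⟩ => H.irrefl h⟩

/-- Prim order of an edge: the larger of the Prim orders of its endpoints. -/
def edgeOrder (P : V → ℕ) : Sym2 V → ℕ :=
  Sym2.lift ⟨fun u v => max (P u) (P v), fun u v => max_comm _ _⟩


/-!
Each vertex `v ≠ v₀` is attached by Prim to a parent `par v` through the lightest edge leaving
`{x | P x < P v}`; by the exchange argument (distinct weights) that edge lies in the MST `T`, and
since a tree is minimally connected, the parent edges are all of `T`. So if `P vi < P vj`, the
edge `vi vj` is the parent edge of `vj`: it is the lightest edge across `{x | P x < P vj}`, and,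
being the heaviest edge of `T`, the only edge of `T` across that cut. Following parents, every
vertex before `vj` reaches `v₀` and every later vertex reaches `vj` without using `vi vj`, while
`vi` and `vj` are separated since `vi vj` is a bridge of `T`.
-/

namespace SimpleGraph

theorem Reachable.of_forall_adj_reachable {G H : SimpleGraph V}
    (h : ∀ a b, G.Adj a b → H.Reachable a b) {u v : V} (huv : G.Reachable u v) :
    H.Reachable u v := by
  obtain ⟨p⟩ := huv
  induction p with
  | nil => rfl
  | cons hadj _ ih => exact (h _ _ hadj).trans ih

theorem reachable_of_forall_adj_parent {H : SimpleGraph V} (f : V → ℕ) (par : V → V)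
    {S : Set V} {r : V} (hpar : ∀ v ∈ S, v ≠ r → par v ∈ S ∧ f (par v) < f v ∧ H.Adj (par v) v)
    {v : V} (hv : v ∈ S) : H.Reachable v r := by
  induction hn : f v using Nat.strong_induction_on generalizing v with
  | _ n ih =>
    by_cases hvr : v = r
    · exact hvr ▸ Reachable.refl v
    obtain ⟨hparS, hlt, hadj⟩ := hpar v hv hvr
    exact hadj.symm.reachable.trans (ih _ (hn ▸ hlt) hparS rfl)

theorem exists_two_connectedComponents {D : SimpleGraph V} {C : Set V} {a b : V}
    (hab : ¬D.Reachable a b) (ha : ∀ v ∈ C, D.Reachable v a) (hb : ∀ v ∉ C, D.Reachable v b) :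
    ∃ cL cR : D.ConnectedComponent,
      cL ≠ cR ∧ (∀ c, c = cL ∨ c = cR) ∧ cL.supp = C ∧ cR.supp = Cᶜ := by
  have hCa : ∀ v, D.Reachable v a ↔ v ∈ C :=
    fun v => ⟨fun h => by_contra fun hv => hab (h.symm.trans (hb v hv)), ha v⟩
  have hCb : ∀ v, D.Reachable v b ↔ v ∉ C :=
    fun v => ⟨fun h hv => hab ((ha v hv).symm.trans h), hb v⟩
  refine ⟨D.connectedComponentMk a, D.connectedComponentMk b,
    fun h => hab (ConnectedComponent.exact h), fun c => ?_, ?_, ?_⟩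
  · induction c using ConnectedComponent.ind with | h v =>
    by_cases hv : v ∈ C
    · exact Or.inl (ConnectedComponent.sound (ha v hv))
    · exact Or.inr (ConnectedComponent.sound (hb v hv))
  · ext v
    exact ConnectedComponent.eq.trans (hCa v)
  · ext v
    exact ConnectedComponent.eq.trans (hCb v)

theorem IsAcyclic.not_reachable_deleteEdges_of_mem_edges {T : SimpleGraph V} (hT : T.IsAcyclic)
    {u v x y : V} {p : T.Walk u v} (hp : p.IsPath) (hxy : s(x, y) ∈ p.edges) :
    ¬(T.deleteEdges {s(x, y)}).Reachable u v := by
  classical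
  rw [reachable_deleteEdges_iff_exists_walk]
  rintro ⟨q, hq⟩
  have hpq : p = q.bypass :=
    congrArg Subtype.val ((hT.subsingleton_path u v).elim ⟨p, hp⟩ ⟨_, q.bypass_isPath⟩)
  exact hq (q.edges_bypass_subset_edges (hpq ▸ hxy))

theorem IsTree.sup_edge_deleteEdges {T : SimpleGraph V} (hT : T.IsTree) {u v x y : V}
    {p : T.Walk u v} (hp : p.IsPath) (hxy : s(x, y) ∈ p.edges) (huv : ¬T.Adj u v) :
    (T.deleteEdges {s(x, y)} ⊔ edge u v).IsTree := by
  set T' := T.deleteEdges {s(x, y)} ⊔ edge u v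
  have hne : u ≠ v := by
    rintro rfl
    simp [(Walk.isPath_iff_nil.mp hp).eq_nil] at hxy
  have hacyc : T'.IsAcyclic := (hT.isAcyclic.anti (deleteEdges_le _)).sup_edge_of_not_reachable
    (hT.isAcyclic.not_reachable_deleteEdges_of_mem_edges hp hxy)
  -- otherwise `T' + xy ⊇ T + uv` would be acyclic, but `uv` closes a cycle with `p` in `T`
  have hreach_xy : T'.Reachable x y := by
    by_contra h
    have hle : T ⊔ edge u v ≤ T' ⊔ edge x y := by
      refine sup_le (fun a b hab => ?_) (le_sup_right.trans le_sup_left)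
      by_cases he : s(a, b) = s(x, y)
      · exact Or.inr ((edge_adj ..).mpr ⟨Sym2.eq_iff.mp he, hab.ne⟩)
      · exact Or.inl (Or.inl (deleteEdges_adj.mpr ⟨hab, he⟩))
    have := (hacyc.sup_edge_of_not_reachable h).anti hle
    exact ((isAcyclic_sup_fromEdgeSet_iff.mp this).2 ⟨p⟩).elim hne huv
  refine ⟨(connected_iff _).mpr ⟨fun a b => ?_, ⟨u⟩⟩, hacyc⟩
  refine (hT.connected.preconnected a b).of_forall_adj_reachable fun c d hcd => ?_
  by_cases he : s(c, d) = s(x, y)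
  · rcases Sym2.eq_iff.mp he with ⟨rfl, rfl⟩ | ⟨rfl, rfl⟩
    exacts [hreach_xy, hreach_xy.symm]
  · exact Adj.reachable (Or.inl (deleteEdges_adj.mpr ⟨hcd, he⟩))

theorem IsTree.eq_parent_of_adj {T : SimpleGraph V} (hT : T.IsTree) (f : V → ℕ) (par : V → V)
    {r : V} (hpar : ∀ v ≠ r, f (par v) < f v ∧ T.Adj (par v) v) {a b : V} (hab : T.Adj a b)
    (hlt : f a < f b) : a = par b := by
  let H := fromEdgeSet {e | ∃ v ≠ r, e = s(par v, v)}
  have hHT : H ≤ T := by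
    rintro x y ⟨⟨v, hv, he⟩, -⟩
    rw [← mem_edgeSet, he]
    exact (hpar v hv).2
  have hH : H.Connected := by
    have hHadj : ∀ v ≠ r, H.Adj (par v) v := fun v hv => by
      simp only [H, fromEdgeSet_adj]
      exact ⟨⟨v, hv, rfl⟩, (hpar v hv).2.ne⟩
    have hroot : ∀ x, H.Reachable x r := fun x =>
      reachable_of_forall_adj_parent f par (S := Set.univ)
        (fun v _ hv => ⟨trivial, (hpar v hv).1, hHadj v hv⟩) (Set.mem_univ x)
    exact (connected_iff _).mpr ⟨fun x y => (hroot x).trans (hroot y).symm, ⟨r⟩⟩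
  -- a tree is minimally connected, so the parent edges are all of `T`
  rw [← (isTree_iff_minimal_connected.mp hT).eq_of_le hH hHT] at hab
  obtain ⟨⟨v, hv, he⟩, -⟩ := hab
  rcases Sym2.eq_iff.mp he with ⟨rfl, rfl⟩ | ⟨rfl, rfl⟩
  · rfl
  · exact absurd (hpar a hv).1 hlt.not_gt

end SimpleGraph

open SimpleGraph

section

variable {G T : SimpleGraph V} {w : Sym2 V → ℝ} {v₀ : V} {P : V → ℕ}

theorem isTreeOn_univ_iff [Nonempty V] : IsTreeOn T Set.univ ↔ T.IsTree :=
  ⟨fun ⟨_, hreach, hacyc⟩ => ⟨(connected_iff _).mpr ⟨fun a b => hreach a trivial b trivial,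
      inferInstance⟩, hacyc⟩,
    fun hT => ⟨fun _ _ _ _ => trivial, fun a _ b _ => hT.connected.preconnected a b,
      hT.isAcyclic⟩⟩

theorem IsPrimOrderOn.seed_le {S : Set V} (hP : IsPrimOrderOn G w S v₀ P) {v : V} (hv : v ∈ S) :
    P v₀ ≤ P v := by
  rw [hP.2.1]
  exact (hP.2.2.1.mapsTo hv).1

theorem IsPrimOrderOn.exists_parent {S : Set V} (hP : IsPrimOrderOn G w S v₀ P) :
    ∃ par : V → V, ∀ v ∈ S, v ≠ v₀ → par v ∈ S ∧ P (par v) < P v ∧ G.Adj (par v) v ∧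
      ∀ x ∈ S, ∀ y ∈ S, P x < P v → P v ≤ P y → G.Adj x y → w s(par v, v) ≤ w s(x, y) := by
  obtain ⟨hv₀, hP₁, hbij, hmin⟩ := hP
  have h : ∀ v, ∃ u, v ∈ S → v ≠ v₀ → u ∈ S ∧ P u < P v ∧ G.Adj u v ∧
      ∀ x ∈ S, ∀ y ∈ S, P x < P v → P v ≤ P y → G.Adj x y → w s(u, v) ≤ w s(x, y) := by
    intro v
    by_cases hv : v ∈ S ∧ v ≠ v₀
    · have hP1 : P v ≠ 1 := fun h => hv.2 (hbij.injOn hv.1 hv₀ (h.trans hP₁.symm))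
      obtain ⟨u, hu⟩ := hmin v hv.1 hP1
      exact ⟨u, fun _ _ => hu⟩
    · exact ⟨v, fun h1 h2 => absurd ⟨h1, h2⟩ hv⟩
  choose par hpar using h
  exact ⟨par, hpar⟩

variable [Fintype V]

theorem totalWeight_eq_finsum (H : SimpleGraph V) :
    totalWeight H w = ∑ᶠ e ∈ H.edgeSet, w e :=
  (finsum_mem_eq_finite_toFinset_sum w _).symm

theorem totalWeight_sup_edge_deleteEdges {u v x y : V} (hxy : T.Adj x y) (huv : ¬T.Adj u v)
    (hne : u ≠ v) :
    totalWeight (T.deleteEdges {s(x, y)} ⊔ edge u v) w + w s(x, y) =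
      totalWeight T w + w s(u, v) := by
  have hfin : (T.edgeSet \ {s(x, y)}).Finite := Set.toFinite _
  have hT : ∑ᶠ e ∈ T.edgeSet, w e = w s(x, y) + ∑ᶠ e ∈ T.edgeSet \ {s(x, y)}, w e := by
    rw [← finsum_mem_insert _ (fun h => h.2 rfl) hfin, Set.insert_sdiff_singleton,
      Set.insert_eq_of_mem (show s(x, y) ∈ T.edgeSet from hxy)]
  have hT' : (T.deleteEdges {s(x, y)} ⊔ edge u v).edgeSet =
      insert s(u, v) (T.edgeSet \ {s(x, y)}) := by
    rw [edgeSet_sup, edgeSet_deleteEdges, edgeSet_edge_of_ne hne, Set.union_singleton]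
  rw [totalWeight_eq_finsum, totalWeight_eq_finsum, hT', finsum_mem_insert _ _ hfin, hT]
  · ring
  · exact fun h => huv h.1

theorem IsMSTOn.adj_of_forall_crossing_le (hT : IsMSTOn G w Set.univ T)
    (hw : Set.InjOn w G.edgeSet) {C : Set V} {u v : V} (hu : u ∈ C) (hv : v ∉ C)
    (huv : G.Adj u v) (hmin : ∀ x ∈ C, ∀ y ∉ C, G.Adj x y → w s(u, v) ≤ w s(x, y)) :
    T.Adj u v := by
  by_contra hnot
  obtain ⟨hTG, htree, hTmin⟩ := hT
  have : Nonempty V := ⟨u⟩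
  have hTtree := isTreeOn_univ_iff.mp htree
  obtain ⟨p, hp⟩ := hTtree.connected.exists_isPath u v
  obtain ⟨⟨⟨x, y⟩, hxy⟩, hd, hx, hy⟩ := p.exists_boundary_dart C hu hv
  have hxyp : s(x, y) ∈ p.edges := by
    rw [Walk.edges_eq_map_darts]
    exact List.mem_map_of_mem hd
  have hlt : w s(u, v) < w s(x, y) := by
    refine (hmin x hx y hy (hTG hxy)).lt_of_ne fun h => hnot ?_
    rw [← mem_edgeSet, hw huv (hTG hxy) h]
    exact hxy
  have hT'G : T.deleteEdges {s(x, y)} ⊔ edge u v ≤ G :=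
    sup_le ((deleteEdges_le _).trans hTG) ((edge_le_iff _).mpr (Or.inr huv))
  have hT'min := hTmin _ hT'G (isTreeOn_univ_iff.mpr (hTtree.sup_edge_deleteEdges hp hxyp hnot))
  linarith [totalWeight_sup_edge_deleteEdges (w := w) hxy hnot huv.ne]

theorem IsMSTOn.exists_primParent (hT : IsMSTOn G w Set.univ T) (hw : Set.InjOn w G.edgeSet)
    (hP : IsPrimOrderOn G w Set.univ v₀ P) :
    ∃ par : V → V, ∀ v ≠ v₀, P (par v) < P v ∧ T.Adj (par v) v ∧
      ∀ x y, P x < P v → P v ≤ P y → G.Adj x y → w s(par v, v) ≤ w s(x, y) := by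
  obtain ⟨par, hpar⟩ := hP.exists_parent
  refine ⟨par, fun v hv => ?_⟩
  obtain ⟨-, hlt, hadj, hmin⟩ := hpar v trivial hv
  have hmin' : ∀ x y, P x < P v → P v ≤ P y → G.Adj x y → w s(par v, v) ≤ w s(x, y) :=
    fun x y => hmin x trivial y trivial
  exact ⟨hlt, hT.adj_of_forall_crossing_le hw (C := {x | P x < P v}) hlt (lt_irrefl (P v)) hadj
    fun x hx y hy => hmin' x y hx (not_lt.mp hy), hmin'⟩

theorem exists_components_deleteEdges_of_lt (hw : Set.InjOn w G.edgeSet)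
    (hT : IsMSTOn G w Set.univ T) (hP : IsPrimOrderOn G w Set.univ v₀ P) {vi vj : V}
    (hmem : T.Adj vi vj) (hmax : ∀ e ∈ T.edgeSet, w e ≤ w s(vi, vj)) (hlt : P vi < P vj) :
    ∃ cL cR : (T.deleteEdges {s(vi, vj)}).ConnectedComponent,
      cL ≠ cR ∧ (∀ c, c = cL ∨ c = cR) ∧
      cL.supp = {v | P v < P vj} ∧ cR.supp = {v | P v < P vj}ᶜ := by
  have : Nonempty V := ⟨vi⟩
  have hTtree : T.IsTree := isTreeOn_univ_iff.mp hT.2.1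
  obtain ⟨par, hpar⟩ := hT.exists_primParent hw hP
  have hv₀ : P v₀ < P vj := (hP.seed_le trivial).trans_lt hlt
  have hvj : vj ≠ v₀ := by rintro rfl; exact lt_irrefl _ hv₀
  have hvi : vi = par vj := hTtree.eq_parent_of_adj P par
    (fun v hv => ⟨(hpar v hv).1, (hpar v hv).2.1⟩) hmem hlt
  have hcross : ∀ x y, T.Adj x y → P x < P vj → P vj ≤ P y → s(x, y) = s(vi, vj) :=
    fun x y hxy hx hy => hw (hT.1 hxy) (hT.1 hmem) <| le_antisymm (hmax _ hxy)
      (hvi ▸ (hpar vj hvj).2.2 x y hx hy (hT.1 hxy))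
  have hne : ∀ v ≠ v₀, v ≠ vj → s(par v, v) ≠ s(vi, vj) := by
    intro v hv hvj h
    rcases Sym2.eq_iff.mp h with ⟨-, rfl⟩ | ⟨hpv, rfl⟩
    · exact hvj rfl
    · have := (hpar v hv).1
      rw [hpv] at this
      omega
  set D := T.deleteEdges {s(vi, vj)}
  have hD : ∀ v ≠ v₀, v ≠ vj → D.Adj (par v) v :=
    fun v hv hvj => deleteEdges_adj.mpr ⟨(hpar v hv).2.1, hne v hv hvj⟩
  have hleft : ∀ v ∈ {x | P x < P vj}, D.Reachable v v₀ :=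
    fun v hv => reachable_of_forall_adj_parent P par (fun u hu hu₀ =>
      have hlt := (hpar u hu₀).1
      ⟨hlt.trans hu, hlt, hD u hu₀ (ne_of_apply_ne P (show P u < P vj from hu).ne)⟩) hv
  have hright : ∀ v ∉ {x | P x < P vj}, D.Reachable v vj :=
    fun v hv => reachable_of_forall_adj_parent (S := {x | P x < P vj}ᶜ) P par (fun u hu huj =>
      have hu₀ : u ≠ v₀ := by rintro rfl; exact hu hv₀
      ⟨fun hpu => hne u hu₀ huj (hcross _ _ ((hpar u hu₀).2.1) hpu (not_lt.mp hu)),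
        (hpar u hu₀).1, hD u hu₀ huj⟩) hv
  exact exists_two_connectedComponents
    (isAcyclic_iff_forall_adj_isBridge.mp hTtree.isAcyclic hmem)
    (fun v hv => (hleft v hv).trans (hleft vi hlt).symm) hright

end

theorem vertex_sets_after_breaking_longest_mst_edge_general {V : Type*} [Fintype V] (G T : SimpleGraph V) (w : Sym2 V → ℝ)
    (hdistinct : Set.InjOn w G.edgeSet)
    (hT : IsMSTOn G w Set.univ T) (v₀ : V) (P : V → ℕ)
    (hP : IsPrimOrderOn G w Set.univ v₀ P)
    (vi vj : V) (hmem : s(vi, vj) ∈ T.edgeSet)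
    (hmax : ∀ e ∈ T.edgeSet, w e ≤ w s(vi, vj)) :
    ∃ cL cR : (T.deleteEdges {s(vi, vj)}).ConnectedComponent,
      cL ≠ cR ∧ (∀ c, c = cL ∨ c = cR) ∧
      cL.supp = {v | P v < edgeOrder P s(vi, vj)} ∧
      cR.supp = {v | edgeOrder P s(vi, vj) ≤ P v} := by
  wlog hlt : P vi < P vj generalizing vi vj
  · have hne : P vi ≠ P vj := fun h =>
      (T.ne_of_adj hmem) (hP.2.2.1.injOn trivial trivial h)
    rw [Sym2.eq_swap (a := vi)] at hmem hmax ⊢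
    exact this vj vi hmem hmax (by omega)
  have horder : edgeOrder P s(vi, vj) = P vj := max_eq_right hlt.le
  simp only [horder, ← not_lt, ← Set.compl_ofPred]
  exact exists_components_deleteEdges_of_lt hdistinct hT hP hmem hmax hlt

theorem vertex_sets_after_breaking_longest_mst_edge {V : Type*} [Fintype V] (G T : SimpleGraph V) (w : Sym2 V → ℝ)
    (hconn : G.Connected) (hdistinct : Set.InjOn w G.edgeSet)
    (hT : IsMSTOn G w Set.univ T) (v₀ : V) (P : V → ℕ)
    (hP : IsPrimOrderOn G w Set.univ v₀ P)
    (vi vj : V) (hmem : s(vi, vj) ∈ T.edgeSet)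
    (hmax : ∀ e ∈ T.edgeSet, w e ≤ w s(vi, vj)) :
    ∃ cL cR : (T.deleteEdges {s(vi, vj)}).ConnectedComponent,
      cL ≠ cR ∧ (∀ c, c = cL ∨ c = cR) ∧
      cL.supp = {v | P v < edgeOrder P s(vi, vj)} ∧
      cR.supp = {v | edgeOrder P s(vi, vj) ≤ P v} :=
  vertex_sets_after_breaking_longest_mst_edge_general G T w hdistinct hT v₀ P hP vi vj hmem hmax
end

section
/- Let G be a finite connected simple graph with real edge weights, let T be its (unique) minimum spanning tree under the assumption of pairwise distinct weights, and let P be a Prim order of G with an arbitrary seed vertex v₀. Let e_max be the edge of T of maximum weight, and let T_L and T_R denote the two connected components of T − e_max, with vertex sets V_L and V_R, where the seed vertex v₀ lies in V_L and v_j denotes the endpoint of e_max lying in V_R. Then: (i) the restriction of P to V_L is a Prim order of T_L with seed v₀ (after identifying the positions {1, …, |V_L|}); and (ii) the map v ↦ P(v) − P(v_j) + 1 on V_R is a Prim order of T_R with seed v_j. -/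
open SimpleGraph

variable {V : Type*}

/-!
By the cut property every Prim step adds an edge of the MST `T`. Removing `e = s(vi, vj)` splits
`T` into the side `L` of the seed and the side `R` of `vj`. A vertex of `R` can only be reached
through `e` or from an earlier vertex of `R`, so `vj` is the first vertex of `R` to be added, and
its Prim step is `e`. So `e` is a lightest edge leaving the vertices added before `vj`; a vertex of
`L` not yet added would give such a crossing edge in `T - e`, no lighter than `e` by this
minimality and no heavier since `e` is the heaviest tree edge, contradicting distinct weights.
Hence `L` fills the positions before `P vj` and `R` those from `P vj` on, and inside each block the Prim steps are edges of `T - e`, minimal among the edges of `T - e`.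
-/

open Set

namespace SimpleGraph

lemma Reachable.deleteEdges_reachable_or {H : SimpleGraph V} {a x y : V} (h : H.Reachable a x) :
    (H.deleteEdges {s(x, y)}).Reachable a x ∨ (H.deleteEdges {s(x, y)}).Reachable a y := by
  rw [reachable_iff_reflTransGen] at h
  induction h using Relation.ReflTransGen.head_induction_on with
  | refl => exact .inl .rfl
  | @head a c hac _ ih =>
    by_cases he : s(a, c) = s(x, y)
    · rcases Sym2.eq_iff.mp he with ⟨rfl, -⟩ | ⟨rfl, -⟩
      · exact .inl .rfl
      · exact .inr .rfl
    · have hD : (H.deleteEdges {s(x, y)}).Adj a c := (deleteEdges_adj).mpr ⟨hac, he⟩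
      exact ih.imp hD.reachable.trans hD.reachable.trans

lemma Preconnected.reachable_deleteEdges_iff {T : SimpleGraph V} (hT : T.Preconnected)
    {v₀ x y : V} (hseed : ¬ (T.deleteEdges {s(x, y)}).Reachable v₀ y) (v : V) :
    (T.deleteEdges {s(x, y)}).Reachable v₀ v ↔ ¬ (T.deleteEdges {s(x, y)}).Reachable y v := by
  refine ⟨fun h hv => hseed (h.trans hv.symm), fun hv => ?_⟩
  have h₀ := (hT v₀ x).deleteEdges_reachable_or.resolve_right hseed
  have h := (hT v x).deleteEdges_reachable_or.resolve_right fun h => hv h.symm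
  exact h₀.trans h.symm

lemma Preconnected.deleteEdges_sup_edge {T : SimpleGraph V} (hT : T.Preconnected) {x y u v : V}
    (huv : ¬ (T.deleteEdges {s(x, y)}).Reachable u v) :
    (T.deleteEdges {s(x, y)} ⊔ edge u v).Preconnected := by
  set D := T.deleteEdges {s(x, y)}
  have hside : ∀ a, D.Reachable a x ∨ D.Reachable a y := fun a =>
    (hT a x).deleteEdges_reachable_or
  have hDle : D ≤ D ⊔ edge u v := le_sup_left
  have huv' : (D ⊔ edge u v).Reachable u v :=
    Adj.reachable <| Or.inr <|
      (edge_adj _ _ _ _).mpr ⟨.inl ⟨rfl, rfl⟩, fun h => huv (h ▸ .rfl)⟩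
  -- `u` and `v` lie on opposite sides of the deleted edge, so the new edge joins the sides
  have hxy : (D ⊔ edge u v).Reachable x y := by
    rcases hside u with hu | hu <;> rcases hside v with hv | hv
    · exact absurd (hu.trans hv.symm) huv
    · exact (hu.mono hDle).symm.trans (huv'.trans (hv.mono hDle))
    · exact (hv.mono hDle).symm.trans (huv'.symm.trans (hu.mono hDle))
    · exact absurd (hu.trans hv.symm) huv
  have hx : ∀ a, (D ⊔ edge u v).Reachable a x := fun a =>
    (hside a).elim (·.mono hDle) fun h => (h.mono hDle).trans hxy.symm
  exact fun a b => (hx a).trans (hx b).symm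

lemma IsAcyclic.not_reachable_deleteEdges {T : SimpleGraph V} (hT : T.IsAcyclic) {u v : V}
    {p : T.Walk u v} (hp : p.IsPath) {e : Sym2 V} (he : e ∈ p.edges) :
    ¬ (T.deleteEdges {e}).Reachable u v := by
  classical
  rintro ⟨q⟩
  have hpq : (⟨p, hp⟩ : T.Path u v) = ⟨q.bypass.mapLe (deleteEdges_le _),
      q.bypass_isPath.mapLe (deleteEdges_le _)⟩ := (hT.subsingleton_path u v).elim _ _
  rw [Subtype.mk.injEq] at hpq
  rw [hpq, Walk.edges_mapLe_eq_edges] at he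
  have := q.bypass.edges_subset_edgeSet he
  rw [edgeSet_deleteEdges] at this
  exact this.2 rfl

lemma IsAcyclic.not_reachable_deleteEdges_of_adj {T : SimpleGraph V} (hT : T.IsAcyclic)
    {x y : V} (hxy : T.Adj x y) : ¬ (T.deleteEdges {s(x, y)}).Reachable x y :=
  isBridge_iff.mp (isAcyclic_iff_forall_adj_isBridge.mp hT hxy)

end SimpleGraph

lemma IsTreeOn.preconnected {T : SimpleGraph V} (hT : IsTreeOn T univ) : T.Preconnected :=
  fun a b => hT.2.1 a trivial b trivial

lemma IsTreeOn.isAcyclic {T : SimpleGraph V} {S : Set V} (hT : IsTreeOn T S) : T.IsAcyclic :=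
  hT.2.2

lemma IsMSTOn.le [Fintype V] {G T : SimpleGraph V} {w : Sym2 V → ℝ} {S : Set V}
    (hT : IsMSTOn G w S T) : T ≤ G :=
  hT.1

lemma IsMSTOn.isTreeOn [Fintype V] {G T : SimpleGraph V} {w : Sym2 V → ℝ} {S : Set V}
    (hT : IsMSTOn G w S T) : IsTreeOn T S :=
  hT.2.1

lemma IsTreeOn.deleteEdges_sup_edge {T : SimpleGraph V} (hT : IsTreeOn T univ) {x y u v : V}
    (huv : ¬ (T.deleteEdges {s(x, y)}).Reachable u v) :
    IsTreeOn (T.deleteEdges {s(x, y)} ⊔ edge u v) univ :=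
  ⟨fun _ _ _ _ => trivial, fun a _ b _ => hT.preconnected.deleteEdges_sup_edge huv a b,
    (hT.isAcyclic.anti (deleteEdges_le _)).sup_edge_of_not_reachable huv⟩

lemma totalWeight_deleteEdges_sup_edge [Fintype V] {H : SimpleGraph V} (w : Sym2 V → ℝ)
    {x y u v : V} (hxy : H.Adj x y) (huv : ¬ H.Adj u v) (hne : u ≠ v) :
    totalWeight (H.deleteEdges {s(x, y)} ⊔ edge u v) w =
      totalWeight H w - w s(x, y) + w s(u, v) := by
  classical
  have hset : (H.deleteEdges {s(x, y)} ⊔ edge u v).edgeSet.toFinite.toFinset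
      = insert s(u, v) (H.edgeSet.toFinite.toFinset.erase s(x, y)) := by
    ext e
    rcases eq_or_ne e s(u, v) with rfl | he
    · simp [hne]
    · simp [he, and_comm]
  have huvF : s(u, v) ∉ H.edgeSet.toFinite.toFinset.erase s(x, y) := by
    simp [huv]
  rw [totalWeight, hset, Finset.sum_insert huvF,
    Finset.sum_erase_eq_sub (by simpa using hxy)]
  unfold totalWeight
  ring

/-- Cut property. Otherwise, exchanging the edge where the tree path from `u` to `v` crosses
the cut for `s(u, v)` would give a lighter spanning tree. -/
lemma IsMSTOn.adj_of_forall_cut_le [Fintype V] {G T : SimpleGraph V} {w : Sym2 V → ℝ}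
    (hdistinct : InjOn w G.edgeSet) (hT : IsMSTOn G w univ T)
    {A : Set V} {u v : V} (hu : u ∈ A) (hv : v ∉ A) (huv : G.Adj u v)
    (hmin : ∀ x ∈ A, ∀ y ∉ A, G.Adj x y → w s(u, v) ≤ w s(x, y)) :
    T.Adj u v := by
  by_contra hnadj
  obtain ⟨hTG, htree, hopt⟩ := hT
  obtain ⟨p, hp⟩ := (IsTreeOn.preconnected htree u v).exists_isPath
  obtain ⟨d, hd, hdA, hdA'⟩ := p.exists_boundary_dart A hu hv
  obtain ⟨⟨x, y⟩, hxy⟩ := d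
  have hsep : ¬ (T.deleteEdges {s(x, y)}).Reachable u v :=
    htree.isAcyclic.not_reachable_deleteEdges hp (List.mem_map_of_mem hd)
  have hlt : w s(u, v) < w s(x, y) := by
    refine (hmin x hdA y hdA' (hTG hxy)).lt_of_ne fun h => hnadj ?_
    rw [← mem_edgeSet, hdistinct huv (hTG hxy) h]
    exact hxy
  have hexch := hopt _ (sup_le ((deleteEdges_le _).trans hTG) ((edge_le_iff G).mpr (.inr huv)))
    (htree.deleteEdges_sup_edge hsep)
  rw [totalWeight_deleteEdges_sup_edge w hxy hnadj huv.ne] at hexch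
  linarith

/-- `hQ` says `Q = P - a + 1` on the component, without truncated subtraction. -/
lemma isPrimOrderOn_connectedComponent {H : SimpleGraph V} {w : Sym2 V → ℝ} {s : V}
    {P Q : V → ℕ} {a b : ℕ} (hbij : BijOn P univ (Icc 1 (univ : Set V).ncard)) (ha : 1 ≤ a)
    (hb : b ≤ (univ : Set V).ncard + 1) (hcomp : ∀ v, H.Reachable s v ↔ a ≤ P v ∧ P v < b)
    (hQ : ∀ v, H.Reachable s v → Q v + a = P v + 1) (hPs : P s = a)
    (hparent : ∀ v, H.Reachable s v → P v ≠ a → ∃ u, P u < P v ∧ H.Adj u v ∧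
      ∀ x y, P x < P v → P v ≤ P y → H.Adj x y → w s(u, v) ≤ w s(x, y)) :
    IsPrimOrderOn H w (H.connectedComponentMk s).supp s Q := by
  have hsupp : (H.connectedComponentMk s).supp = {v | H.Reachable s v} := by
    ext v
    rw [ConnectedComponent.mem_supp_iff, ConnectedComponent.eq, reachable_comm]; rfl
  rw [hsupp]
  have hQbij : BijOn Q {v | H.Reachable s v} (Icc 1 (b - a)) := by
    refine ⟨fun v hv => ?_, fun v hv v' hv' h => ?_, fun k hk => ?_⟩
    · have := hcomp v |>.mp hv
      have := hQ v hv
      simp only [mem_Icc]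
      omega
    · have := hQ v hv
      have := hQ v' hv'
      exact hbij.injOn trivial trivial (by omega)
    · obtain ⟨hk1, hk2⟩ := hk
      obtain ⟨v, -, hv⟩ :=
        hbij.surjOn (mem_Icc.mpr ⟨(by omega : 1 ≤ k + a - 1), by omega⟩)
      have hvs := (hcomp v).mpr (by omega)
      exact ⟨v, hvs, by have := hQ v hvs; omega⟩
  have hcard : {v | H.Reachable s v}.ncard = b - a := by
    rw [hQbij.ncard_eq, ncard_Icc_nat]
    omega
  refine ⟨.rfl, by have := hQ s .rfl; omega, hcard ▸ hQbij, fun v hv hQv => ?_⟩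
  have hv' := hQ v hv
  obtain ⟨u, hu, huv, hmin⟩ := hparent v hv (by omega)
  have hus : H.Reachable s u := hv.trans huv.symm.reachable
  have hu' := hQ u hus
  refine ⟨u, hus, by omega, huv, fun x hx y hy hxv hvy hxy => hmin x y ?_ ?_ hxy⟩
  · have := hQ x hx
    omega
  · have := hQ y hy
    omega

namespace IsPrimOrderOn

variable {G T : SimpleGraph V} {w : Sym2 V → ℝ} {v₀ vi vj : V} {P : V → ℕ}

lemma map_seed (hP : IsPrimOrderOn G w univ v₀ P) : P v₀ = 1 :=
  hP.2.1

lemma bijOn (hP : IsPrimOrderOn G w univ v₀ P) : BijOn P univ (Icc 1 (univ : Set V).ncard) :=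
  hP.2.2.1

lemma mem_Icc (hP : IsPrimOrderOn G w univ v₀ P) (v : V) : P v ∈ Icc 1 (univ : Set V).ncard :=
  hP.bijOn.mapsTo trivial

lemma eq_seed_of_eq_one (hP : IsPrimOrderOn G w univ v₀ P) {v : V} (hv : P v = 1) : v = v₀ :=
  hP.bijOn.injOn trivial trivial (hv.trans hP.map_seed.symm)

lemma exists_parent_of_isMSTOn [Fintype V] (hdistinct : InjOn w G.edgeSet)
    (hT : IsMSTOn G w univ T) (hP : IsPrimOrderOn G w univ v₀ P) {v : V} (hv : P v ≠ 1) :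
    ∃ u, P u < P v ∧ T.Adj u v ∧
      ∀ x y, P x < P v → P v ≤ P y → G.Adj x y → w s(u, v) ≤ w s(x, y) := by
  obtain ⟨u, -, hu, huv, hmin⟩ := hP.2.2.2 v trivial hv
  refine ⟨u, hu, ?_, fun x y => hmin x trivial y trivial⟩
  exact hT.adj_of_forall_cut_le hdistinct (A := {x | P x < P v}) hu (by simp) huv
    fun x hx y hy => hmin x trivial y trivial hx (not_lt.mp hy)

lemma le_of_reachable_deleteEdges [Fintype V] (hdistinct : InjOn w G.edgeSet)
    (hT : IsMSTOn G w univ T) (hP : IsPrimOrderOn G w univ v₀ P) (hadj : T.Adj vi vj)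
    (hseed : ¬ (T.deleteEdges {s(vi, vj)}).Reachable v₀ vj) {v : V}
    (hv : (T.deleteEdges {s(vi, vj)}).Reachable vj v) : P vj ≤ P v := by
  induction hPv : P v using Nat.strong_induction_on generalizing v with
  | _ k ih =>
  subst hPv
  by_contra! hlt
  have hv1 : P v ≠ 1 := fun h => hseed (hP.eq_seed_of_eq_one h ▸ hv.symm)
  obtain ⟨u, hu, huv, -⟩ := hP.exists_parent_of_isMSTOn hdistinct hT hv1
  by_cases he : s(u, v) = s(vi, vj)
  · rcases Sym2.eq_iff.mp he with ⟨-, rfl⟩ | ⟨-, rfl⟩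
    · exact lt_irrefl _ hlt
    · exact hT.isTreeOn.isAcyclic.not_reachable_deleteEdges_of_adj hadj hv.symm
  · have hD : (T.deleteEdges {s(vi, vj)}).Adj u v := deleteEdges_adj.mpr ⟨huv, he⟩
    exact (ih (P u) hu (hv.trans hD.symm.reachable) rfl).not_gt (hu.trans hlt)

lemma lt_of_reachable_deleteEdges [Fintype V] (hdistinct : InjOn w G.edgeSet)
    (hT : IsMSTOn G w univ T) (hP : IsPrimOrderOn G w univ v₀ P) (hadj : T.Adj vi vj)
    (hmax : ∀ e ∈ T.edgeSet, w e ≤ w s(vi, vj))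
    (hseed : ¬ (T.deleteEdges {s(vi, vj)}).Reachable v₀ vj) {v : V}
    (hv : (T.deleteEdges {s(vi, vj)}).Reachable v₀ v) : P v < P vj := by
  have hvj1 : P vj ≠ 1 := fun h => hseed (hP.eq_seed_of_eq_one h ▸ .rfl)
  obtain ⟨u, hu, huvj, hmin⟩ := hP.exists_parent_of_isMSTOn hdistinct hT hvj1
  -- `u` comes before `vj`, so it is not on `vj`'s side: the Prim step into `vj` is `s(vi, vj)`
  have hwu : w s(u, vj) = w s(vi, vj) := by
    have hnD : ¬ (T.deleteEdges {s(vi, vj)}).Adj u vj := fun h =>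
      (hP.le_of_reachable_deleteEdges hdistinct hT hadj hseed h.symm.reachable).not_gt hu
    rw [deleteEdges_adj, not_and_not_right, Set.mem_singleton_iff] at hnD
    rw [hnD huvj]
  by_contra! hge
  obtain ⟨p⟩ := hv
  have hv₀ : P v₀ < P vj := by
    have := hP.mem_Icc vj
    rw [hP.map_seed]
    exact lt_of_le_of_ne this.1 hvj1.symm
  obtain ⟨⟨⟨x, y⟩, hxy⟩, -, hx, hy⟩ :=
    p.exists_boundary_dart {x | P x < P vj} hv₀ (not_lt.mpr hge)
  obtain ⟨hTxy, hne⟩ := deleteEdges_adj.mp hxy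
  have hle : w s(x, y) ≤ w s(vi, vj) := hmax _ hTxy
  have hge' : w s(vi, vj) ≤ w s(x, y) := hwu ▸ hmin x y hx (not_lt.mp hy) (hT.le hTxy)
  exact hne (hdistinct (hT.le hTxy) (hT.le hadj) (hle.antisymm hge'))

lemma exists_parent_deleteEdges [Fintype V] (hdistinct : InjOn w G.edgeSet)
    (hT : IsMSTOn G w univ T) (hP : IsPrimOrderOn G w univ v₀ P) (hadj : T.Adj vi vj)
    (hmax : ∀ e ∈ T.edgeSet, w e ≤ w s(vi, vj))
    (hseed : ¬ (T.deleteEdges {s(vi, vj)}).Reachable v₀ vj) {v : V} (hvj : v ≠ vj)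
    (hv : P v ≠ 1) :
    ∃ u, P u < P v ∧ (T.deleteEdges {s(vi, vj)}).Adj u v ∧ ∀ x y, P x < P v → P v ≤ P y →
      (T.deleteEdges {s(vi, vj)}).Adj x y → w s(u, v) ≤ w s(x, y) := by
  obtain ⟨u, hu, huv, hmin⟩ := hP.exists_parent_of_isMSTOn hdistinct hT hv
  refine ⟨u, hu, deleteEdges_adj.mpr ⟨huv, fun he => ?_⟩,
    fun x y hx hy hxy => hmin x y hx hy (hT.le (deleteEdges_le _ hxy))⟩
  rcases Sym2.eq_iff.mp (Set.mem_singleton_iff.mp he) with ⟨-, rfl⟩ | ⟨rfl, rfl⟩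
  · exact hvj rfl
  · have hvi : (T.deleteEdges {s(v, u)}).Reachable v₀ v :=
      (hT.isTreeOn.preconnected.reachable_deleteEdges_iff hseed v).mpr fun h =>
        hT.isTreeOn.isAcyclic.not_reachable_deleteEdges_of_adj hadj h.symm
    exact (hu.trans (hP.lt_of_reachable_deleteEdges hdistinct hT hadj hmax hseed hvi)).false

end IsPrimOrderOn

theorem prim_orders_of_subtrees_after_breaking_longest_edge_general {V : Type*} [Fintype V] (G T : SimpleGraph V) (w : Sym2 V → ℝ)
    (hdistinct : Set.InjOn w G.edgeSet)
    (hT : IsMSTOn G w Set.univ T) (v₀ : V) (P : V → ℕ)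
    (hP : IsPrimOrderOn G w Set.univ v₀ P)
    (vi vj : V) (hmem : s(vi, vj) ∈ T.edgeSet)
    (hmax : ∀ e ∈ T.edgeSet, w e ≤ w s(vi, vj))
    (hseed : ¬ (T.deleteEdges {s(vi, vj)}).Reachable v₀ vj) :
    IsPrimOrderOn (T.deleteEdges {s(vi, vj)}) w
      ((T.deleteEdges {s(vi, vj)}).connectedComponentMk v₀).supp v₀ P ∧
    IsPrimOrderOn (T.deleteEdges {s(vi, vj)}) w
      ((T.deleteEdges {s(vi, vj)}).connectedComponentMk vj).supp vj
      (fun v => P v - P vj + 1) := by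
  have hadj : T.Adj vi vj := hmem
  have hsplit := hT.isTreeOn.preconnected.reachable_deleteEdges_iff hseed
  have hR : ∀ v, (T.deleteEdges {s(vi, vj)}).Reachable vj v ↔ P vj ≤ P v := fun v =>
    ⟨hP.le_of_reachable_deleteEdges hdistinct hT hadj hseed, fun hle => not_not.mp fun hv =>
      (hle.trans_lt (hP.lt_of_reachable_deleteEdges hdistinct hT hadj hmax hseed
        ((hsplit v).mpr hv))).false⟩
  have hL : ∀ v, (T.deleteEdges {s(vi, vj)}).Reachable v₀ v ↔ P v < P vj := fun v => by
    rw [hsplit, hR, not_le]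
  have hparent := fun {v : V} (hvj : v ≠ vj) (hv : P v ≠ 1) =>
    hP.exists_parent_deleteEdges hdistinct hT hadj hmax hseed hvj hv
  have hPvj := hP.mem_Icc vj
  constructor
  · refine isPrimOrderOn_connectedComponent hP.bijOn le_rfl (Nat.le_succ_of_le hPvj.2)
      (fun v => ?_) (fun _ _ => rfl) hP.map_seed fun v hv hv1 => hparent ?_ hv1
    · rw [hL]
      exact ⟨fun h => ⟨(hP.mem_Icc v).1, h⟩, And.right⟩
    · rintro rfl
      exact hseed hv
  · refine isPrimOrderOn_connectedComponent hP.bijOn hPvj.1 le_rfl (fun v => ?_) (fun v hv => ?_)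
      rfl fun v hv hvj => hparent (fun h => hvj (h ▸ rfl)) fun hv1 => ?_
    · rw [hR]
      exact ⟨fun h => ⟨h, Nat.lt_succ_of_le (hP.mem_Icc v).2⟩, And.left⟩
    · have := (hR v).mp hv
      omega
    · exact hseed (hP.eq_seed_of_eq_one hv1 ▸ hv.symm)

theorem prim_orders_of_subtrees_after_breaking_longest_edge {V : Type*} [Fintype V] (G T : SimpleGraph V) (w : Sym2 V → ℝ)
    (hconn : G.Connected) (hdistinct : Set.InjOn w G.edgeSet)
    (hT : IsMSTOn G w Set.univ T) (v₀ : V) (P : V → ℕ)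
    (hP : IsPrimOrderOn G w Set.univ v₀ P)
    (vi vj : V) (hmem : s(vi, vj) ∈ T.edgeSet)
    (hmax : ∀ e ∈ T.edgeSet, w e ≤ w s(vi, vj))
    (hseed : ¬ (T.deleteEdges {s(vi, vj)}).Reachable v₀ vj) :
    IsPrimOrderOn (T.deleteEdges {s(vi, vj)}) w
      ((T.deleteEdges {s(vi, vj)}).connectedComponentMk v₀).supp v₀ P ∧
    IsPrimOrderOn (T.deleteEdges {s(vi, vj)}) w
      ((T.deleteEdges {s(vi, vj)}).connectedComponentMk vj).supp vj
      (fun v => P v - P vj + 1) :=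
  prim_orders_of_subtrees_after_breaking_longest_edge_general G T w hdistinct hT v₀ P hP vi vj hmem
    hmax hseed
end

section
/- Let G be a finite connected simple graph with real edge weights (ties among edge weights allowed), and suppose a run of Prim's algorithm on G with an arbitrary seed vertex produces the Prim order P and the minimum spanning tree T with edge set E_T. Let E_max ⊆ E_T be the set of edges of T whose weight equals the maximum edge weight in T, and let e_max = (v_i, v_j) be the element of E_max with the largest Prim order P(e_max) = max(P(v_i), P(v_j)). Then deleting e_max from T leaves exactly two connected components T_L and T_R, and their edge sets are E_L = {e ∈ E_T : P(e) < P(e_max)} and E_R = {e ∈ E_T : P(e) > P(e_max)}. -/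
/-!
Every tree edge is the edge `s(c v, v)` from a vertex to its Prim parent, and the latest heaviest
edge `s(c vs, vs)` is the first edge leaving the cut `{P < P vs}`, so it has minimum weight among
all edges crossing that cut. Any other tree edge crossing the cut would then be a heaviest edge of
`T` added after `vs`, which is excluded. Hence deleting `s(c vs, vs)` splits `T` exactly into the
vertices `{P < P vs}`, joined to the seed through their parents, and `{P vs ≤ P}`, joined to `vs`;
as the parent edge of `v` has Prim order `P v`, the two edge sets are as claimed.
-/

open SimpleGraph

variable {V : Type*}

theorem mem_restrictTo_edgeSet {H : SimpleGraph V} {S : Set V} {e : Sym2 V} :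
    e ∈ (restrictTo H S).edgeSet ↔ e ∈ H.edgeSet ∧ ∀ v ∈ e, v ∈ S := by
  induction e using Sym2.ind with
  | _ a b => simp [restrictTo]

theorem SimpleGraph.Reachable.iff_of_forall_adj {H : SimpleGraph V} {p : V → Prop}
    (hp : ∀ a b, H.Adj a b → (p a ↔ p b)) {a b : V} (h : H.Reachable a b) : p a ↔ p b := by
  have hrt := (reachable_iff_reflTransGen a b).1 h
  clear h
  induction hrt with
  | refl => rfl
  | tail _ hbc ih => exact ih.trans (hp _ _ hbc)

theorem SimpleGraph.reachable_of_forall_parent {H : SimpleGraph V} {P : V → ℕ} {c : V → V}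
    {S : Set V} (r : V)
    (hS : ∀ v ∈ S, v ≠ r → c v ∈ S ∧ P (c v) < P v ∧ H.Adj (c v) v) :
    ∀ v ∈ S, H.Reachable r v := by
  suffices ∀ n, ∀ v ∈ S, P v = n → H.Reachable r v from fun v hv => this _ v hv rfl
  intro n
  induction n using Nat.strong_induction_on with
  | _ n ih =>
    intro v hv hn
    by_cases hvr : v = r
    · subst hvr; rfl
    · obtain ⟨hcS, hlt, hadj⟩ := hS v hv hvr
      exact (ih _ (hn ▸ hlt) (c v) hcS rfl).trans hadj.reachable

structure IsParentForest (T : SimpleGraph V) (P : V → ℕ) (c : V → V) : Prop where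
  injective : Function.Injective P
  parent_lt : ∀ v, P v ≠ 1 → P (c v) < P v
  edgeSet_eq : T.edgeSet = {e | ∃ v, P v ≠ 1 ∧ e = s(c v, v)}

/-- No parent edge other than `s(c vs, vs)` leaves the cut `{P < P vs}`. -/
def IsCutAt (P : V → ℕ) (c : V → V) (vs : V) : Prop :=
  ∀ v, P v ≠ 1 → v ≠ vs → P vs ≤ P v → P vs ≤ P (c v)

namespace IsParentForest

variable {T : SimpleGraph V} {P : V → ℕ} {c : V → V}

theorem rank_pos (hF : IsParentForest T P c) (v : V) : 0 < P v := by
  by_contra! h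
  have := hF.parent_lt v (by omega)
  omega

theorem parent_mem_edgeSet (hF : IsParentForest T P c) {v : V} (hv : P v ≠ 1) :
    s(c v, v) ∈ T.edgeSet :=
  hF.edgeSet_eq ▸ ⟨v, hv, rfl⟩

theorem edgeOrder_parent (hF : IsParentForest T P c) {v : V} (hv : P v ≠ 1) :
    edgeOrder P s(c v, v) = P v :=
  max_eq_right (hF.parent_lt v hv).le

theorem parent_edge_eq_iff (hF : IsParentForest T P c) {v vs : V} (hv : P v ≠ 1)
    (hvs : P vs ≠ 1) : s(c v, v) = s(c vs, vs) ↔ v = vs := by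
  refine ⟨fun h => hF.injective ?_, fun h => h ▸ rfl⟩
  rw [← hF.edgeOrder_parent hv, ← hF.edgeOrder_parent hvs, h]

theorem deleteEdges_adj_parent (hF : IsParentForest T P c) {v vs : V} (hv : P v ≠ 1)
    (hvs : P vs ≠ 1) (hne : v ≠ vs) : (T.deleteEdges {s(c vs, vs)}).Adj (c v) v := by
  refine deleteEdges_adj.2 ⟨hF.parent_mem_edgeSet hv, fun h => hne ?_⟩
  exact (hF.parent_edge_eq_iff hv hvs).1 (Set.mem_singleton_iff.1 h)

variable {vs : V}

theorem lt_iff_of_deleteEdges_adj (hF : IsParentForest T P c) (hcut : IsCutAt P c vs)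
    {a b : V} (h : (T.deleteEdges {s(c vs, vs)}).Adj a b) : P a < P vs ↔ P b < P vs := by
  obtain ⟨hT, hne⟩ := deleteEdges_adj.1 h
  obtain ⟨v, hv, hab⟩ := hF.edgeSet_eq ▸ (mem_edgeSet T).2 hT
  have hvvs : v ≠ vs := by rintro rfl; exact hne hab
  have hiff : P (c v) < P vs ↔ P v < P vs := by
    have := hF.parent_lt v hv
    have := hcut v hv hvvs
    omega
  rcases Sym2.eq_iff.1 hab with ⟨rfl, rfl⟩ | ⟨rfl, rfl⟩
  exacts [hiff, hiff.symm]

theorem mem_supp_iff_lt (hF : IsParentForest T P c) (hcut : IsCutAt P c vs) {v₀ : V}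
    (hv₀ : P v₀ = 1) (hvs : P vs ≠ 1) (a : V) :
    a ∈ ((T.deleteEdges {s(c vs, vs)}).connectedComponentMk v₀).supp ↔ P a < P vs := by
  rw [ConnectedComponent.mem_supp_iff, ConnectedComponent.eq]
  constructor
  · intro h
    have hv₀vs : P v₀ < P vs := by
      have := hF.rank_pos (c vs)
      have := hF.parent_lt vs hvs
      omega
    exact (h.symm.iff_of_forall_adj fun _ _ => hF.lt_iff_of_deleteEdges_adj hcut).1 hv₀vs
  · refine fun ha => (reachable_of_forall_parent v₀ (P := P) (c := c)
      (S := {v | P v < P vs}) ?_ a ha).symm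
    intro v hv hvv₀
    have hv1 : P v ≠ 1 := fun h => hvv₀ (hF.injective (h.trans hv₀.symm))
    have := hF.parent_lt v hv1
    exact ⟨this.trans hv, this,
      hF.deleteEdges_adj_parent hv1 hvs fun h => hv.ne (congrArg P h)⟩

theorem mem_supp_iff_le (hF : IsParentForest T P c) (hcut : IsCutAt P c vs) (hvs : P vs ≠ 1)
    (a : V) :
    a ∈ ((T.deleteEdges {s(c vs, vs)}).connectedComponentMk vs).supp ↔ P vs ≤ P a := by
  rw [ConnectedComponent.mem_supp_iff, ConnectedComponent.eq]
  constructor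
  · intro h
    have := (h.symm.iff_of_forall_adj fun _ _ => hF.lt_iff_of_deleteEdges_adj hcut).2
    omega
  · refine fun ha => (reachable_of_forall_parent vs (P := P) (c := c)
      (S := {v | P vs ≤ P v}) ?_ a ha).symm
    intro v hv hvvs
    have hlt : P vs < P v := lt_of_le_of_ne hv fun h => hvvs (hF.injective h.symm)
    have hv1 : P v ≠ 1 := by have := hF.rank_pos vs; omega
    exact ⟨hcut v hv1 hvvs hv, hF.parent_lt v hv1, hF.deleteEdges_adj_parent hv1 hvs hvvs⟩

theorem edgeSet_restrictTo_supp_lt (hF : IsParentForest T P c) (hcut : IsCutAt P c vs) {v₀ : V}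
    (hv₀ : P v₀ = 1) (hvs : P vs ≠ 1) :
    (restrictTo (T.deleteEdges {s(c vs, vs)})
        ((T.deleteEdges {s(c vs, vs)}).connectedComponentMk v₀).supp).edgeSet
      = {e ∈ T.edgeSet | edgeOrder P e < P vs} := by
  ext e
  by_cases he : e ∈ T.edgeSet
  swap
  · simp [mem_restrictTo_edgeSet, he]
  obtain ⟨v, hv, rfl⟩ := hF.edgeSet_eq ▸ he
  simp only [mem_restrictTo_edgeSet, edgeSet_deleteEdges, hF.mem_supp_iff_lt hcut hv₀ hvs,
    Set.mem_sdiff, Set.mem_singleton_iff, hF.parent_edge_eq_iff hv hvs, Sym2.mem_iff,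
    forall_eq_or_imp, forall_eq, hF.edgeOrder_parent hv, he, true_and, Set.mem_ofPred_eq]
  exact ⟨fun h => h.2.2,
    fun h => ⟨fun e => h.ne (congrArg P e), (hF.parent_lt v hv).trans h, h⟩⟩

theorem edgeSet_restrictTo_supp_gt (hF : IsParentForest T P c) (hcut : IsCutAt P c vs)
    (hvs : P vs ≠ 1) :
    (restrictTo (T.deleteEdges {s(c vs, vs)})
        ((T.deleteEdges {s(c vs, vs)}).connectedComponentMk vs).supp).edgeSet
      = {e ∈ T.edgeSet | P vs < edgeOrder P e} := by
  ext e
  by_cases he : e ∈ T.edgeSet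
  swap
  · simp [mem_restrictTo_edgeSet, he]
  obtain ⟨v, hv, rfl⟩ := hF.edgeSet_eq ▸ he
  simp only [mem_restrictTo_edgeSet, edgeSet_deleteEdges, hF.mem_supp_iff_le hcut hvs,
    Set.mem_sdiff, Set.mem_singleton_iff, hF.parent_edge_eq_iff hv hvs, Sym2.mem_iff,
    forall_eq_or_imp, forall_eq, hF.edgeOrder_parent hv, he, true_and, Set.mem_ofPred_eq]
  constructor
  · rintro ⟨hne, -, hle⟩
    exact lt_of_le_of_ne hle fun h => hne (hF.injective h.symm)
  · intro hlt
    have hne : v ≠ vs := fun h => hlt.ne (congrArg P h.symm)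
    exact ⟨hne, hcut v hv hne hlt.le, hlt.le⟩

theorem deleteEdges_parent_edge_components (hF : IsParentForest T P c) (hcut : IsCutAt P c vs)
    {v₀ : V} (hv₀ : P v₀ = 1) (hvs : P vs ≠ 1) :
    ∃ cL cR : (T.deleteEdges {s(c vs, vs)}).ConnectedComponent,
      cL ≠ cR ∧ (∀ cc, cc = cL ∨ cc = cR) ∧
      (restrictTo (T.deleteEdges {s(c vs, vs)}) cL.supp).edgeSet
        = {e ∈ T.edgeSet | edgeOrder P e < P vs} ∧
      (restrictTo (T.deleteEdges {s(c vs, vs)}) cR.supp).edgeSet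
        = {e ∈ T.edgeSet | P vs < edgeOrder P e} := by
  refine ⟨_, _, ?_, ?_, hF.edgeSet_restrictTo_supp_lt hcut hv₀ hvs,
    hF.edgeSet_restrictTo_supp_gt hcut hvs⟩
  · intro h
    refine lt_irrefl (P vs) ((hF.mem_supp_iff_lt hcut hv₀ hvs vs).1 ?_)
    exact h ▸ ConnectedComponent.connectedComponentMk_mem
  · refine ConnectedComponent.ind fun v => ?_
    rcases lt_or_ge (P v) (P vs) with h | h
    · exact .inl ((hF.mem_supp_iff_lt hcut hv₀ hvs v).2 h)
    · exact .inr ((hF.mem_supp_iff_le hcut hvs v).2 h)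

theorem isCutAt_of_latest_heaviest {G : SimpleGraph V} {w : Sym2 V → ℝ}
    (hF : IsParentForest T P c) (hG : ∀ v, P v ≠ 1 → G.Adj (c v) v)
    (hmin : ∀ x y, P x < P vs → P vs ≤ P y → G.Adj x y → w s(c vs, vs) ≤ w s(x, y))
    (hmax : ∀ e ∈ T.edgeSet, w e ≤ w s(c vs, vs))
    (hlatest : ∀ e ∈ T.edgeSet, w e = w s(c vs, vs) → edgeOrder P e ≤ P vs) :
    IsCutAt P c vs := by
  intro v hv hne hle
  by_contra! hlt
  have hvT := hF.parent_mem_edgeSet hv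
  have hw : w s(c v, v) = w s(c vs, vs) := le_antisymm (hmax _ hvT) (hmin _ _ hlt hle (hG v hv))
  have hlast := hlatest _ hvT hw
  rw [hF.edgeOrder_parent hv] at hlast
  exact hne (hF.injective (le_antisymm hlast hle))

end IsParentForest

theorem edge_sets_after_breaking_longest_edge_with_largest_prim_order_general {V : Type*} (G T : SimpleGraph V) (w : Sym2 V → ℝ)
    (v₀ : V) (P : V → ℕ) (c : V → V)
    (hP : IsPrimOrderOn G w Set.univ v₀ P)
    (hc : ∀ v : V, P v ≠ 1 → P (c v) < P v ∧ G.Adj (c v) v ∧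
      ∀ x y : V, P x < P v → P v ≤ P y → G.Adj x y → w s(c v, v) ≤ w s(x, y))
    (hTedges : T.edgeSet = {e | ∃ v, P v ≠ 1 ∧ e = s(c v, v)})
    (vi vj : V) (hmem : s(vi, vj) ∈ T.edgeSet)
    (hmax : ∀ e ∈ T.edgeSet, w e ≤ w s(vi, vj))
    (hlargest : ∀ e ∈ T.edgeSet, w e = w s(vi, vj) → edgeOrder P e ≤ edgeOrder P s(vi, vj)) :
    ∃ cL cR : (T.deleteEdges {s(vi, vj)}).ConnectedComponent,
      cL ≠ cR ∧ (∀ cc, cc = cL ∨ cc = cR) ∧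
      (restrictTo (T.deleteEdges {s(vi, vj)}) cL.supp).edgeSet
        = {e ∈ T.edgeSet | edgeOrder P e < edgeOrder P s(vi, vj)} ∧
      (restrictTo (T.deleteEdges {s(vi, vj)}) cR.supp).edgeSet
        = {e ∈ T.edgeSet | edgeOrder P s(vi, vj) < edgeOrder P e} := by
  obtain ⟨-, hPv₀, hbij, -⟩ := hP
  have hF : IsParentForest T P c :=
    ⟨Set.injOn_univ.1 hbij.injOn, fun v hv => (hc v hv).1, hTedges⟩
  obtain ⟨vs, hvs, hvse⟩ := hTedges ▸ hmem
  rw [hvse, hF.edgeOrder_parent hvs] at hlargest ⊢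
  rw [hvse] at hmax
  have hcut := hF.isCutAt_of_latest_heaviest (fun v hv => (hc v hv).2.1) (hc vs hvs).2.2 hmax
    hlargest
  exact hF.deleteEdges_parent_edge_components hcut hPv₀ hvs

theorem edge_sets_after_breaking_longest_edge_with_largest_prim_order {V : Type*} [Fintype V] (G T : SimpleGraph V) (w : Sym2 V → ℝ)
    (hconn : G.Connected) (v₀ : V) (P : V → ℕ) (c : V → V)
    (hP : IsPrimOrderOn G w Set.univ v₀ P)
    (hc : ∀ v : V, P v ≠ 1 → P (c v) < P v ∧ G.Adj (c v) v ∧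
      ∀ x y : V, P x < P v → P v ≤ P y → G.Adj x y → w s(c v, v) ≤ w s(x, y))
    (hTedges : T.edgeSet = {e | ∃ v, P v ≠ 1 ∧ e = s(c v, v)})
    (vi vj : V) (hmem : s(vi, vj) ∈ T.edgeSet)
    (hmax : ∀ e ∈ T.edgeSet, w e ≤ w s(vi, vj))
    (hlargest : ∀ e ∈ T.edgeSet, w e = w s(vi, vj) → edgeOrder P e ≤ edgeOrder P s(vi, vj)) :
    ∃ cL cR : (T.deleteEdges {s(vi, vj)}).ConnectedComponent,
      cL ≠ cR ∧ (∀ cc, cc = cL ∨ cc = cR) ∧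
      (restrictTo (T.deleteEdges {s(vi, vj)}) cL.supp).edgeSet
        = {e ∈ T.edgeSet | edgeOrder P e < edgeOrder P s(vi, vj)} ∧
      (restrictTo (T.deleteEdges {s(vi, vj)}) cR.supp).edgeSet
        = {e ∈ T.edgeSet | edgeOrder P s(vi, vj) < edgeOrder P e} :=
  edge_sets_after_breaking_longest_edge_with_largest_prim_order_general G T w v₀ P c hP hc hTedges
    vi vj hmem hmax hlargest
end
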